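/- Let α > 0 and fix real numbers q_1 > q_2 > q_3. For t < q_3 define f(t) = Q_{14}Q_{23} − Q_{24}Q_{13} + Q_{34}Q_{12}, where q_4 = t, q_{ij} = q_i − q_j and Q_{ij} = q_{ij}|q_{ij}|^{−α−2}. Then f is strictly increasing on (−∞, q_3): for all s < t < q_3 one has f(s) < f(t). -/

import Mathlib

/-!
On `t < q₃` every `q_i - t` is positive, so `f t = Σ ± (q_i - t)^r · w_i` with `r = -α - 1 < 0`
and positive weights `w_i`. Its derivative is `-r` times
`(q₁ - t)^(r-1) w₁ - (q₂ - t)^(r-1) w₂ + (q₃ - t)^(r-1) w₃`, and the negative middle term is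
beaten by the last one: `q₃ - t < q₂ - t` and `w₂ = q₁₃^r < q₁₂^r = w₃`.
-/

open Set

theorem mul_abs_rpow_of_pos {x : ℝ} (hx : 0 < x) (p : ℝ) : x * |x| ^ p = x ^ (p + 1) := by
  rw [abs_of_pos hx, Real.rpow_add_one hx.ne', mul_comm]

theorem hasDerivAt_const_sub_rpow {c t : ℝ} (r : ℝ) (ht : t < c) :
    HasDerivAt (fun s => (c - s) ^ r) (-r * (c - t) ^ (r - 1)) t :=
  (((hasDerivAt_id' t).const_sub c).rpow_const (Or.inl (sub_pos.2 ht).ne')).congr_deriv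
    (by ring)

theorem strictMonoOn_sub_rpow_combination {r a b c A B C : ℝ} (hr : r < 0) (hca : c < a)
    (hcb : c < b) (hA : 0 < A) (hB : 0 ≤ B) (hBC : B < C) :
    StrictMonoOn (fun t => (a - t) ^ r * A - (b - t) ^ r * B + (c - t) ^ r * C) (Iio c) := by
  have hderiv : ∀ t ∈ Iio c, HasDerivAt
      (fun t => (a - t) ^ r * A - (b - t) ^ r * B + (c - t) ^ r * C)
      (-r * ((a - t) ^ (r - 1) * A - (b - t) ^ (r - 1) * B + (c - t) ^ (r - 1) * C)) t := by
    intro t (ht : t < c)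
    exact ((((hasDerivAt_const_sub_rpow r (ht.trans hca)).mul_const A).sub
      ((hasDerivAt_const_sub_rpow r (ht.trans hcb)).mul_const B)).add
      ((hasDerivAt_const_sub_rpow r ht).mul_const C)).congr_deriv (by ring)
  refine strictMonoOn_of_hasDerivWithinAt_pos (convex_Iio c)
    (fun t ht => (hderiv t ht).continuousAt.continuousWithinAt)
    (fun t ht => (hderiv t (interior_subset ht)).hasDerivWithinAt) ?_
  intro t ht
  rw [interior_Iio, mem_Iio] at ht
  have hmiddle : (b - t) ^ (r - 1) * B < (c - t) ^ (r - 1) * C :=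
    mul_lt_mul'' (Real.rpow_lt_rpow_of_neg (by linarith) (by linarith) (by linarith)) hBC
      (Real.rpow_nonneg (by linarith) _) hB
  have hfirst : 0 < (a - t) ^ (r - 1) * A := mul_pos (Real.rpow_pos_of_pos (by linarith) _) hA
  exact mul_pos (neg_pos.2 hr) (by linarith)

theorem stmt3 (α : ℝ) (hα : 0 < α) (q1 q2 q3 : ℝ) (h12 : q2 < q1) (h23 : q3 < q2)
    (f : ℝ → ℝ)
    (hf : ∀ t, f t =
      (q1 - t) * |q1 - t| ^ (-α - 2) * ((q2 - q3) * |q2 - q3| ^ (-α - 2)) -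
      (q2 - t) * |q2 - t| ^ (-α - 2) * ((q1 - q3) * |q1 - q3| ^ (-α - 2)) +
      (q3 - t) * |q3 - t| ^ (-α - 2) * ((q1 - q2) * |q1 - q2| ^ (-α - 2))) :
    StrictMonoOn f (Set.Iio q3) := by
  have hr : -α - 2 + 1 < 0 := by linarith
  have h13 : q3 < q1 := h23.trans h12
  have hweights : (q1 - q3) ^ (-α - 2 + 1) < (q1 - q2) ^ (-α - 2 + 1) :=
    Real.rpow_lt_rpow_of_neg (sub_pos.2 h12) (by linarith) hr
  refine (strictMonoOn_sub_rpow_combination hr h13 h23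
    (Real.rpow_pos_of_pos (sub_pos.2 h23) (-α - 2 + 1)) (Real.rpow_nonneg (sub_pos.2 h13).le _)
    hweights).congr fun t (ht : t < q3) => ?_
  rw [hf, mul_abs_rpow_of_pos (by linarith : 0 < q1 - t),
    mul_abs_rpow_of_pos (by linarith : 0 < q2 - t), mul_abs_rpow_of_pos (sub_pos.2 ht),
    mul_abs_rpow_of_pos (sub_pos.2 h23), mul_abs_rpow_of_pos (sub_pos.2 h13),
    mul_abs_rpow_of_pos (sub_pos.2 h12)]
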